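/- arXiv:1010.5212 — 3 statements merged into one kernel-verified Lean document; each statement's English description precedes it below -/
import Mathlib

section
/- No bi-immune subset of ℕ is generically computable. -/
open Filter

open scoped Classical in
/-- `ρ_n(A) = |A ∩ {0,…,n}| / (n+1)`. -/
noncomputable def partialDensity (A : Set ℕ) (n : ℕ) : ℝ :=
  ((Finset.range (n + 1)).filter (· ∈ A)).card / (n + 1)

/-- The upper density of `A`: `limsup_n ρ_n(A)`. -/
noncomputable def upperDensity (A : Set ℕ) : ℝ :=
  Filter.limsup (partialDensity A) Filter.atTop

/-- `A` has asymptotic density `r`: `ρ_n(A) → r`. -/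
def HasDensity (A : Set ℕ) (r : ℝ) : Prop :=
  Filter.Tendsto (partialDensity A) Filter.atTop (nhds r)

open scoped Classical in
/-- The characteristic function of `A` (with values in `{0,1} ⊆ ℕ`). -/
noncomputable def charFun (A : Set ℕ) : ℕ → ℕ := fun n => if n ∈ A then 1 else 0

/-- `Φ` is a generic description of `A`: `Φ(x) = χ_A(x)` whenever `Φ(x)` is defined,
and the domain of `Φ` has density 1. -/
def IsGenericDescription (Φ : ℕ →. ℕ) (A : Set ℕ) : Prop :=
  (∀ x m, m ∈ Φ x → m = charFun A x) ∧ HasDensity {x | (Φ x).Dom} 1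

/-- `A` is generically computable: some partial computable function is a generic
description of `A`. -/
def GenericallyComputable (A : Set ℕ) : Prop :=
  ∃ Φ : ℕ →. ℕ, Partrec Φ ∧ IsGenericDescription Φ A

/-- `A` is computably enumerable: `A` is the domain of a partial computable function. -/
def CE (A : Set ℕ) : Prop :=
  ∃ f : ℕ →. ℕ, Partrec f ∧ A = {x | (f x).Dom}

/-- `A` is a computable set. -/
def ComputableSet (A : Set ℕ) : Prop := ComputablePred (· ∈ A)

/-- `A` is immune: infinite, with no infinite c.e. subset. -/
def Immune (A : Set ℕ) : Prop :=
  A.Infinite ∧ ∀ W : Set ℕ, CE W → W.Infinite → ¬W ⊆ A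

/-- `A` is bi-immune: both `A` and its complement are immune. -/
def BiImmune (A : Set ℕ) : Prop := Immune A ∧ Immune Aᶜ

/-- `A` and `B` are generically similar: their symmetric difference has density 0. -/
def GenericallySimilar (A B : Set ℕ) : Prop := HasDensity (symmDiff A B) 0

/-- `A` is coarsely computable: generically similar to a computable set. -/
def CoarselyComputable (A : Set ℕ) : Prop :=
  ∃ C : Set ℕ, ComputableSet C ∧ GenericallySimilar A C

/-- `R_k = {m : 2^k ∣ m, 2^(k+1) ∤ m}`. -/
def Rset (k : ℕ) : Set ℕ := {m | 2 ^ k ∣ m ∧ ¬2 ^ (k + 1) ∣ m}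

/-- `R(A) = ⋃_{n ∈ A} R_n`. -/
def RofSet (A : Set ℕ) : Set ℕ := ⋃ n ∈ A, Rset n

/-- Partial functions `ℕ →. ℕ` computable relative to a (total) oracle `O : ℕ → ℕ`. -/
inductive RecursiveInOracle (O : ℕ → ℕ) : (ℕ →. ℕ) → Prop
  | zero : RecursiveInOracle O (pure 0)
  | succ : RecursiveInOracle O fun n => Part.some (n + 1)
  | left : RecursiveInOracle O fun n => Part.some (Nat.unpair n).1
  | right : RecursiveInOracle O fun n => Part.some (Nat.unpair n).2
  | oracle : RecursiveInOracle O fun n => Part.some (O n)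
  | pair {f g : ℕ →. ℕ} : RecursiveInOracle O f → RecursiveInOracle O g →
      RecursiveInOracle O fun n => Nat.pair <$> f n <*> g n
  | comp {f g : ℕ →. ℕ} : RecursiveInOracle O f → RecursiveInOracle O g →
      RecursiveInOracle O fun n => g n >>= f
  | prec {f g : ℕ →. ℕ} : RecursiveInOracle O f → RecursiveInOracle O g →
      RecursiveInOracle O (Nat.unpaired fun a n =>
        n.rec (f a) fun y IH => do let i ← IH; g (Nat.pair a (Nat.pair y i)))
  | rfind {f : ℕ →. ℕ} : RecursiveInOracle O f →
      RecursiveInOracle O fun a => Nat.rfind fun n => (fun m => m = 0) <$> f (Nat.pair a n)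

/-- `A ≤_T B`: the characteristic function of `A` is computable relative to `B`. -/
def TuringReducibleSet (A B : Set ℕ) : Prop :=
  RecursiveInOracle (charFun B) fun n => Part.some (charFun A n)

/-- `A ≡_T B`. -/
def TuringEquivalentSet (A B : Set ℕ) : Prop :=
  TuringReducibleSet A B ∧ TuringReducibleSet B A

open Filter

/-!
If `Φ` is a partial computable generic description of `A`, the sets `{x | Φ x = 1} ⊆ A` and
`{x | Φ x = 0} ⊆ Aᶜ` are c.e., and together they cover the domain of `Φ`, which is infinite
because it has density 1. So one of them is an infinite c.e. subset of `A` or of `Aᶜ`.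
-/

lemma charFun_eq_one_iff {A : Set ℕ} {x : ℕ} : charFun A x = 1 ↔ x ∈ A := by
  unfold charFun; split_ifs with hx <;> simp [hx]

lemma charFun_eq_zero_iff {A : Set ℕ} {x : ℕ} : charFun A x = 0 ↔ x ∉ A := by
  unfold charFun; split_ifs with hx <;> simp [hx]

lemma Partrec.ce_setOf_mem {Φ : ℕ →. ℕ} (hΦ : Partrec Φ) (k : ℕ) : CE {x | k ∈ Φ x} := by
  classical
  refine ⟨fun x => (Φ x).bind fun m =>
    Part.ofOption (if m = k then Option.some 0 else Option.none), ?_, ?_⟩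
  · refine hΦ.bind (Computable.ofOption ?_)
    exact (Primrec.ite (Primrec.eq.comp Primrec.snd (Primrec.const k))
      (Primrec.const _) (Primrec.const _)).to_comp
  · ext x
    simp only [Set.mem_ofPred_eq, Part.bind_dom]
    constructor
    · intro hk
      exact ⟨hk.1, by simp [Part.get_eq_of_mem hk]⟩
    · rintro ⟨hd, hk⟩
      by_cases hget : (Φ x).get hd = k
      · exact hget ▸ Part.get_mem hd
      · simp [hget] at hk

lemma hasDensity_zero_of_finite {D : Set ℕ} (hD : D.Finite) : HasDensity D 0 := by
  classical
  refine squeeze_zero (g := fun n : ℕ => (hD.toFinset.card : ℝ) / (n + 1))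
    (fun n => by unfold partialDensity; positivity) (fun n => ?_) ?_
  · unfold partialDensity
    gcongr
    exact fun x hx => hD.mem_toFinset.mpr (Finset.mem_filter.mp hx).2
  · simpa [Function.comp_def] using
      (tendsto_const_div_atTop_nhds_zero_nat (hD.toFinset.card : ℝ)).comp (tendsto_add_atTop_nat 1)

lemma HasDensity.infinite {D : Set ℕ} {r : ℝ} (h : HasDensity D r) (hr : r ≠ 0) :
    D.Infinite :=
  fun hD => hr (tendsto_nhds_unique h (hasDensity_zero_of_finite hD))

lemma Immune.finite_of_subset {A W : Set ℕ} (hA : Immune A) (hW : CE W) (hWA : W ⊆ A) :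
    W.Finite :=
  Set.not_infinite.mp fun hinf => hA.2 W hW hinf hWA

section GenericDescription

variable {Φ : ℕ →. ℕ} {A : Set ℕ}

lemma IsGenericDescription.setOf_one_mem_subset (hΦ : IsGenericDescription Φ A) :
    {x | 1 ∈ Φ x} ⊆ A :=
  fun x hx => charFun_eq_one_iff.mp (hΦ.1 x 1 hx).symm

lemma IsGenericDescription.setOf_zero_mem_subset (hΦ : IsGenericDescription Φ A) :
    {x | 0 ∈ Φ x} ⊆ Aᶜ :=
  fun x hx => charFun_eq_zero_iff.mp (hΦ.1 x 0 hx).symm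

lemma IsGenericDescription.dom_subset (hΦ : IsGenericDescription Φ A) :
    {x | (Φ x).Dom} ⊆ {x | 0 ∈ Φ x} ∪ {x | 1 ∈ Φ x} := by
  intro x hx
  have hval := hΦ.1 x _ (Part.get_mem hx)
  unfold charFun at hval
  split_ifs at hval
  · exact Or.inr (hval ▸ Part.get_mem hx)
  · exact Or.inl (hval ▸ Part.get_mem hx)

end GenericDescription

/-- no bi-immune set is generically computable. -/
theorem stmt2 (A : Set ℕ) (h : BiImmune A) : ¬GenericallyComputable A := by
  rintro ⟨Φ, hΦ, hdesc⟩
  have hzero : {x | 0 ∈ Φ x}.Finite :=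
    h.2.finite_of_subset (hΦ.ce_setOf_mem 0) hdesc.setOf_zero_mem_subset
  have hone : {x | 1 ∈ Φ x}.Finite :=
    h.1.finite_of_subset (hΦ.ce_setOf_mem 1) hdesc.setOf_one_mem_subset
  exact hdesc.2.infinite one_ne_zero ((hzero.union hone).subset hdesc.dom_subset)
end

section
/- For every A ⊆ ℕ, the density of R(A) exists and ρ(R(A)) = Σ_{n ∈ A} 2^{-(n+1)}. -/
open Filter

/-- Partial functions `ℕ →. ℕ` computable relative to a (total) oracle `O : ℕ → ℕ`. -/
inductive RecursiveIn' (O : ℕ → ℕ) : (ℕ →. ℕ) → Prop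
  | zero : RecursiveIn' O (pure 0)
  | succ : RecursiveIn' O fun n => Part.some (n + 1)
  | left : RecursiveIn' O fun n => Part.some (Nat.unpair n).1
  | right : RecursiveIn' O fun n => Part.some (Nat.unpair n).2
  | oracle : RecursiveIn' O fun n => Part.some (O n)
  | pair {f g : ℕ →. ℕ} : RecursiveIn' O f → RecursiveIn' O g →
      RecursiveIn' O fun n => Nat.pair <$> f n <*> g n
  | comp {f g : ℕ →. ℕ} : RecursiveIn' O f → RecursiveIn' O g →
      RecursiveIn' O fun n => g n >>= f
  | prec {f g : ℕ →. ℕ} : RecursiveIn' O f → RecursiveIn' O g →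
      RecursiveIn' O (Nat.unpaired fun a n =>
        n.rec (f a) fun y IH => do let i ← IH; g (Nat.pair a (Nat.pair y i)))
  | rfind {f : ℕ →. ℕ} : RecursiveIn' O f →
      RecursiveIn' O fun a => Nat.rfind fun n => (fun m => m = 0) <$> f (Nat.pair a n)

/-- `A ≤_T B`: the characteristic function of `A` is computable relative to `B`. -/
def TuringReducible' (A B : Set ℕ) : Prop :=
  RecursiveIn' (charFun B) fun n => Part.some (charFun A n)

/-- `A ≡_T B`. -/
def TuringEquivalent' (A B : Set ℕ) : Prop :=
  TuringReducible' A B ∧ TuringReducible' B A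

/-! `R(A)` is the disjoint union of the sets `R_k`, `k ∈ A`, and `R_k` consists of the multiples
of `2^k` that are not multiples of `2^(k+1)`, so it has density `2^(-k) - 2^(-(k+1))`.
Counting gives the bound `ρ_n(R_k) ≤ 2^(-k)`, uniform in `n` and summable in `k`, so by
Tannery's theorem the limit may be taken term by term in `ρ_n(R(A)) = Σ_{k ∈ A} ρ_n(R_k)`. -/

open Function

theorem partialDensity_nonneg (s : Set ℕ) (n : ℕ) : 0 ≤ partialDensity s n := by
  unfold partialDensity
  positivity

theorem partialDensity_eq_sum_indicator (s : Set ℕ) (n : ℕ) :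
    partialDensity s n = (∑ m ∈ Finset.range (n + 1), s.indicator 1 m) / (n + 1) := by
  classical
  rw [partialDensity, Finset.card_filter]
  push_cast
  rfl

theorem partialDensity_iUnion {ι : Type*} {s : ι → Set ℕ} (hs : Pairwise (Disjoint on s))
    (n : ℕ) : partialDensity (⋃ i, s i) n = ∑' i, partialDensity (s i) n := by
  have hsum (m : ℕ) : Summable fun i => (s i).indicator (1 : ℕ → ℝ) m := by
    refine summable_of_hasFiniteSupport (Set.Subsingleton.finite fun i hi j hj => ?_)
    by_contra hij
    exact Set.disjoint_left.mp (hs hij) (Set.mem_of_indicator_ne_zero hi)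
      (Set.mem_of_indicator_ne_zero hj)
  simp only [partialDensity_eq_sum_indicator, indicator_iUnion_of_pairwise_disjoint s hs,
    tsum_div_const]
  rw [Summable.tsum_finsetSum fun m _ => hsum m]

theorem hasDensity_iUnion {ι : Type*} {s : ι → Set ℕ} (hs : Pairwise (Disjoint on s))
    {d b : ι → ℝ} (hd : ∀ i, HasDensity (s i) (d i)) (hb : Summable b)
    (hle : ∀ i n, partialDensity (s i) n ≤ b i) : HasDensity (⋃ i, s i) (∑' i, d i) := by
  rw [HasDensity, funext (partialDensity_iUnion hs)]
  refine tendsto_tsum_of_dominated_convergence hb hd (Eventually.of_forall fun n i => ?_)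
  rw [Real.norm_of_nonneg (partialDensity_nonneg _ _)]
  exact hle i n

theorem partialDensity_sdiff {s t : Set ℕ} (hts : t ⊆ s) (n : ℕ) :
    partialDensity (s \ t) n = partialDensity s n - partialDensity t n := by
  simp only [partialDensity_eq_sum_indicator, Set.indicator_sdiff hts, Pi.sub_apply,
    Finset.sum_sub_distrib, sub_div]

theorem HasDensity.sdiff {s t : Set ℕ} {a b : ℝ} (hs : HasDensity s a) (ht : HasDensity t b)
    (hts : t ⊆ s) : HasDensity (s \ t) (a - b) := by
  rw [HasDensity, funext (partialDensity_sdiff hts)]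
  exact hs.sub ht

theorem card_filter_range_dvd (d n : ℕ) :
    ((Finset.range (n + 1)).filter (d ∣ ·)).card = n / d + 1 := by
  rw [← Nat.count_eq_card_filter_range, Nat.count_succ', Nat.count_eq_card_filter_range,
    Nat.card_multiples, if_pos (dvd_zero d)]

theorem partialDensity_setOf_dvd (d n : ℕ) :
    partialDensity {m | d ∣ m} n = ((n / d : ℕ) + 1) / (n + 1) := by
  simp only [partialDensity, Set.mem_ofPred_eq, card_filter_range_dvd]
  push_cast
  rfl

theorem setOf_dvd_subset_of_dvd {a b : ℕ} (hab : a ∣ b) : {m | b ∣ m} ⊆ {m | a ∣ m} :=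
  fun _ hm => hab.trans hm

theorem hasDensity_setOf_dvd {d : ℕ} (hd : 0 < d) : HasDensity {m | d ∣ m} (1 / d) := by
  have hd' : (0 : ℝ) < d := by exact_mod_cast hd
  have hlower (n : ℕ) : 1 / d ≤ partialDensity {m | d ∣ m} n := by
    have : (n : ℝ) + 1 ≤ d * ((n / d : ℕ) + 1) := by exact_mod_cast Nat.lt_mul_div_succ n hd
    rw [partialDensity_setOf_dvd, div_le_div_iff₀ hd' (by positivity)]
    linarith
  have hupper (n : ℕ) : partialDensity {m | d ∣ m} n ≤ 1 / d + 1 / (n + 1) :=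
    calc partialDensity {m | d ∣ m} n ≤ ((n + 1) / d + 1) / (n + 1) := by
          rw [partialDensity_setOf_dvd]
          gcongr
          exact Nat.cast_div_le.trans (by gcongr; linarith)
      _ = 1 / d + 1 / (n + 1) := by field_simp
  refine tendsto_of_tendsto_of_tendsto_of_le_of_le tendsto_const_nhds ?_ hlower hupper
  simpa using tendsto_one_div_add_atTop_nhds_zero_nat.const_add (1 / (d : ℝ))

theorem Rset_eq_sdiff (k : ℕ) : Rset k = {m | 2 ^ k ∣ m} \ {m | 2 ^ (k + 1) ∣ m} := rfl

theorem Rset_pairwise_disjoint : Pairwise (Disjoint on Rset) := by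
  intro i j hij
  wlog hlt : i < j generalizing i j
  · exact (this hij.symm (hij.lt_or_gt.resolve_left hlt)).symm
  exact Set.disjoint_left.mpr fun m hi hj => hi.2 ((pow_dvd_pow 2 hlt).trans hj.1)

theorem hasDensity_Rset (k : ℕ) : HasDensity (Rset k) ((1 / 2) ^ (k + 1)) := by
  rw [Rset_eq_sdiff]
  convert (hasDensity_setOf_dvd (Nat.two_pow_pos k)).sdiff
    (hasDensity_setOf_dvd (Nat.two_pow_pos (k + 1)))
    (setOf_dvd_subset_of_dvd (pow_dvd_pow 2 k.le_succ)) using 1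
  push_cast
  rw [one_div_pow, pow_succ]
  field_simp
  ring

theorem partialDensity_Rset_le (k n : ℕ) : partialDensity (Rset k) n ≤ (1 / 2) ^ k := by
  rw [Rset_eq_sdiff, partialDensity_sdiff (setOf_dvd_subset_of_dvd (pow_dvd_pow 2 k.le_succ)),
    partialDensity_setOf_dvd, partialDensity_setOf_dvd, ← sub_div, div_le_iff₀ (by positivity)]
  calc ((n / 2 ^ k : ℕ) + 1 - ((n / 2 ^ (k + 1) : ℕ) + 1) : ℝ) ≤ (n / 2 ^ k : ℕ) := by
        linarith [(Nat.cast_nonneg (n / 2 ^ (k + 1)) : (0 : ℝ) ≤ _)]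
    _ ≤ n / 2 ^ k := by exact_mod_cast Nat.cast_div_le
    _ ≤ (1 / 2) ^ k * (n + 1) := by
        rw [one_div_pow, div_mul_eq_mul_div, one_mul]
        gcongr
        linarith

/-- `ρ(R(A)) = Σ_{n ∈ A} 2^{-(n+1)}`. -/
theorem stmt4 (A : Set ℕ) :
    HasDensity (RofSet A) (∑' n : A, ((1 : ℝ) / 2) ^ ((n : ℕ) + 1)) := by
  rw [RofSet, Set.biUnion_eq_iUnion]
  exact hasDensity_iUnion (Rset_pairwise_disjoint.comp_of_injective Subtype.val_injective)
    (fun k => hasDensity_Rset k) (summable_geometric_two.subtype A)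
    (fun k n => partialDensity_Rset_le k n)
end

section
/- A real number r ∈ [0,1] is the asymptotic density of some computable subset of ℕ if and only if r is a Δ⁰₂ real, i.e. r = lim_{n→∞} q_n for some computable sequence (q_n) of rational numbers. -/
open Filter

/-- Partial functions `ℕ →. ℕ` computable relative to a (total) oracle `O : ℕ → ℕ`. -/
inductive OracleRecursiveIn (O : ℕ → ℕ) : (ℕ →. ℕ) → Prop
  | zero : OracleRecursiveIn O (pure 0)
  | succ : OracleRecursiveIn O fun n => Part.some (n + 1)
  | left : OracleRecursiveIn O fun n => Part.some (Nat.unpair n).1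
  | right : OracleRecursiveIn O fun n => Part.some (Nat.unpair n).2
  | oracle : OracleRecursiveIn O fun n => Part.some (O n)
  | pair {f g : ℕ →. ℕ} : OracleRecursiveIn O f → OracleRecursiveIn O g →
      OracleRecursiveIn O fun n => Nat.pair <$> f n <*> g n
  | comp {f g : ℕ →. ℕ} : OracleRecursiveIn O f → OracleRecursiveIn O g →
      OracleRecursiveIn O fun n => g n >>= f
  | prec {f g : ℕ →. ℕ} : OracleRecursiveIn O f → OracleRecursiveIn O g →
      OracleRecursiveIn O (Nat.unpaired fun a n =>
        n.rec (f a) fun y IH => do let i ← IH; g (Nat.pair a (Nat.pair y i)))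
  | rfind {f : ℕ →. ℕ} : OracleRecursiveIn O f →
      OracleRecursiveIn O fun a => Nat.rfind fun n => (fun m => m = 0) <$> f (Nat.pair a n)

/-- `A ≤_T B`: the characteristic function of `A` is computable relative to `B`. -/
def SetTuringReducible (A B : Set ℕ) : Prop :=
  OracleRecursiveIn (charFun B) fun n => Part.some (charFun A n)

/-- `A ≡_T B`. -/
def SetTuringEquivalent (A B : Set ℕ) : Prop :=
  SetTuringReducible A B ∧ SetTuringReducible B A

/-- `r` is a `Δ⁰₂` real: the limit of a computable sequence of rationals. -/
def Delta02Real (r : ℝ) : Prop :=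
  ∃ q : ℕ → ℚ, Computable q ∧
    Filter.Tendsto (fun n => (q n : ℝ)) Filter.atTop (nhds r)

/-!
If `A` is computable, the partial densities `ρ_n(A)` form a computable sequence of rationals,
which converges to `ρ(A)` whenever the density exists.

Conversely, let computable rationals `q_n` converge to `r ∈ [0,1]`, and build `A` greedily: `n`
enters `A` exactly when this keeps `|A ∩ {0,…,n}| ≤ (n + 1) q_n`. Membership only compares
rationals, so `A` is computable. Once `q_n` stays within `ε` of `r`, elements are added only below
the bound `n (r + ε)`, and an element is added whenever the count falls below `n (r - ε)`; hence the
count stays within a constant of both bounds and `ρ_n(A) → r`.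
-/

open Encodable Denumerable Topology

namespace Int

theorem encode_natCast (n : ℕ) : encode (n : ℤ) = 2 * n := rfl

theorem encode_negSucc (n : ℕ) : encode (negSucc n) = 2 * n + 1 := rfl

theorem natAbs_eq_encode_succ_div_two (z : ℤ) : z.natAbs = (encode z + 1) / 2 := by
  cases z with
  | ofNat n => rw [ofNat_eq_natCast, encode_natCast]; omega
  | negSucc n => rw [encode_negSucc]; simp; omega

theorem nonneg_iff_encode_mod_two (z : ℤ) : 0 ≤ z ↔ encode z % 2 = 0 := by
  cases z with
  | ofNat n => rw [ofNat_eq_natCast, encode_natCast]; omega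
  | negSucc n => rw [encode_negSucc]; simp

theorem toNat_eq_ite_encode (z : ℤ) : z.toNat = if encode z % 2 = 0 then encode z / 2 else 0 := by
  cases z with
  | ofNat n => rw [ofNat_eq_natCast, encode_natCast]; simp
  | negSucc n => rw [encode_negSucc]; simp

theorem primrec_natAbs : Primrec Int.natAbs :=
  (Primrec.nat_div.comp (Primrec.succ.comp .encode) (.const 2)).of_eq fun z =>
    (natAbs_eq_encode_succ_div_two z).symm

theorem primrecPred_nonneg : PrimrecPred fun z : ℤ => 0 ≤ z :=
  (Primrec.eq.comp (Primrec.nat_mod.comp .encode (.const 2)) (.const 0)).of_eq fun z =>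
    (nonneg_iff_encode_mod_two z).symm

theorem primrec_toNat : Primrec Int.toNat :=
  (Primrec.ite (Primrec.eq.comp (Primrec.nat_mod.comp .encode (.const 2)) (.const 0))
    (Primrec.nat_div.comp .encode (.const 2)) (.const 0)).of_eq fun z =>
      (toNat_eq_ite_encode z).symm

end Int

namespace Nat

theorem coprime_iff_forall_lt (a b : ℕ) :
    a.Coprime b ↔ ∀ k < a + b + 1, k ∣ a → k ∣ b → k = 1 := by
  refine ⟨fun h k _ hka hkb => Nat.eq_one_of_dvd_one (h ▸ Nat.dvd_gcd hka hkb), fun h => ?_⟩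
  refine h _ ?_ (Nat.gcd_dvd_left a b) (Nat.gcd_dvd_right a b)
  rcases Nat.eq_zero_or_pos a with rfl | ha
  · simp
  · have := Nat.gcd_le_left b ha; omega

theorem primrecRel_coprime : PrimrecRel Nat.Coprime := by
  have hdvd : PrimrecRel fun (k : ℕ) (m : ℕ) => k ∣ m :=
    (Primrec.eq.comp (Primrec.nat_mod.comp .snd .fst) (.const 0)).of_eq fun p =>
      (Nat.dvd_iff_mod_eq_zero ..).symm
  have hR : PrimrecRel fun (k : ℕ) (p : ℕ × ℕ) => k ∣ p.1 → k ∣ p.2 → k = 1 :=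
    (((hdvd.comp .fst (Primrec.fst.comp .snd)).and (hdvd.comp .fst (Primrec.snd.comp .snd))).not.or
      (Primrec.eq.comp .fst (.const 1))).of_eq fun x => by tauto
  exact (hR.forall_mem_list.comp
    (Primrec.list_range.comp (Primrec.nat_add.comp (Primrec.nat_add.comp .fst .snd) (.const 1)))
    .id).of_eq fun p => by simp [coprime_iff_forall_lt p.1 p.2]

end Nat

theorem ComputablePred.computable_count {p : ℕ → Prop} [DecidablePred p] (hp : ComputablePred p) :
    Computable (Nat.count p) := by
  have hstep : Computable₂ fun (_ : ℕ) (x : ℕ × ℕ) => x.2 + if p x.1 then 1 else 0 :=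
    (Primrec.nat_add.to_comp.comp (Computable.snd.comp .snd)
      ((hp.decide.comp (Computable.fst.comp .snd)).cond (.const 1) (.const 0))).of_eq fun x => by
        by_cases h : p x.2.1 <;> simp [h]
  refine (Computable.nat_rec .id (.const 0) hstep).of_eq fun n => ?_
  induction n with
  | zero => rfl
  | succ n ih => simp [Nat.count_succ, ← ih]

namespace Rat

/- Mathlib's `Primcodable ℚ` comes from `Denumerable ℚ`: it numbers the rationals in increasing
order of these codes, so `encode q` counts the codes below `rawCode q`. -/
def rawCode (q : ℚ) : ℕ := Nat.pair (encode q.num) q.den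

theorem mem_range_rawCode_iff (j : ℕ) : j ∈ Set.range rawCode ↔
    (Nat.unpair j).2 ≠ 0 ∧ (ofNat ℤ (Nat.unpair j).1).natAbs.Coprime (Nat.unpair j).2 := by
  constructor
  · rintro ⟨q, rfl⟩
    rw [rawCode, Nat.unpair_pair, ofNat_encode]
    exact ⟨q.den_nz, q.reduced⟩
  · rintro ⟨hden, hcop⟩
    refine ⟨⟨ofNat ℤ (Nat.unpair j).1, (Nat.unpair j).2, hden, hcop⟩, ?_⟩
    rw [rawCode, encode_ofNat, Nat.pair_unpair]

theorem primrecPred_mem_range_rawCode : PrimrecPred (· ∈ Set.range rawCode) :=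
  ((Primrec.eq.comp (Primrec.snd.comp .unpair) (.const 0)).not.and
    (Nat.primrecRel_coprime.comp
      (Int.primrec_natAbs.comp ((Primrec.ofNat ℤ).comp (Primrec.fst.comp .unpair)))
      (Primrec.snd.comp .unpair))).of_eq fun j => (mem_range_rawCode_iff j).symm

-- The instance used by `Denumerable ℚ`, so that `count_rawCode_ofNat` holds by `rfl`.
instance : DecidablePred (· ∈ Set.range rawCode) := decidableRangeEncode ℚ

theorem count_rawCode_ofNat (k : ℕ) :
    Nat.count (· ∈ Set.range rawCode) (rawCode (ofNat ℚ k)) = k :=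
  (rfl : _ = @encode ℚ Denumerable.toEncodable (ofNat ℚ k)).trans (encode_ofNat k)

theorem exists_rawCode_count_eq (k : ℕ) :
    ∃ x, x ∈ Set.range rawCode ∧ Nat.count (· ∈ Set.range rawCode) x = k :=
  ⟨_, ⟨_, rfl⟩, count_rawCode_ofNat k⟩

theorem rawCode_ofNat (k : ℕ) : rawCode (ofNat ℚ k) = Nat.find (exists_rawCode_count_eq k) := by
  obtain ⟨⟨q, hq⟩, hcount⟩ := Nat.find_spec (exists_rawCode_count_eq k)
  obtain ⟨k', rfl⟩ : ∃ k', ofNat ℚ k' = q := ⟨_, ofNat_encode q⟩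
  rw [← hq, count_rawCode_ofNat] at hcount
  rw [← hq, hcount]

theorem computable_rawCode : Computable rawCode := by
  have hcount : Computable (Nat.count (· ∈ Set.range rawCode)) :=
    primrecPred_mem_range_rawCode.computablePred.computable_count
  have hfind : Computable fun k => Nat.find (exists_rawCode_count_eq k) := by
    refine Computable.find (Computable.computablePred ?_) exists_rawCode_count_eq
    exact (Primrec.and.to_comp.comp
      (primrecPred_mem_range_rawCode.decide.to_comp.comp .snd)
      (Primrec.eq.decide.to_comp.comp (hcount.comp .snd) .fst)).of_eq fun p => by simp
  exact (hfind.comp .encode).of_eq fun q => by rw [← rawCode_ofNat, ofNat_encode]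

theorem computable_num : Computable Rat.num :=
  ((Computable.ofNat ℤ).comp ((Primrec.fst.comp .unpair).to_comp.comp computable_rawCode)).of_eq
    fun q => by rw [rawCode, Nat.unpair_pair, ofNat_encode]

theorem computable_den : Computable Rat.den :=
  ((Primrec.snd.comp .unpair).to_comp.comp computable_rawCode).of_eq fun q => by simp [rawCode]

theorem eq_natCast_div_succ_iff (q : ℚ) (a b : ℕ) :
    q = a / (b + 1) ↔ 0 ≤ q.num ∧ q.num.toNat * (b + 1) = a * q.den := by
  have hden : (0 : ℚ) < q.den := by exact_mod_cast q.pos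
  have hint : q = a / (b + 1) ↔ q.num * (b + 1) = a * q.den := by
    rw [eq_div_iff (by positivity)]
    nth_rewrite 1 [← num_div_den q]
    rw [div_mul_eq_mul_div, div_eq_iff hden.ne']
    exact_mod_cast Iff.rfl
  rw [hint]
  constructor
  · intro h
    have hnum : 0 ≤ q.num := by
      have : 0 ≤ q.num * (b + 1) := h ▸ by positivity
      exact nonneg_of_mul_nonneg_left this (by positivity)
    refine ⟨hnum, ?_⟩
    have := Int.toNat_of_nonneg hnum
    zify
    rw [this, h]
  · rintro ⟨hnum, h⟩
    rw [← Int.toNat_of_nonneg hnum]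
    exact_mod_cast h

theorem natCast_succ_le_mul_iff (a b : ℕ) (q : ℚ) :
    (a + 1 : ℚ) ≤ b * q ↔ (a + 1) * q.den ≤ b * q.num.toNat := by
  have hden : (0 : ℚ) < q.den := by exact_mod_cast q.pos
  have hint : (a + 1 : ℚ) ≤ b * q ↔ (a + 1) * (q.den : ℤ) ≤ b * q.num := by
    nth_rewrite 1 [← num_div_den q]
    rw [mul_div_assoc', le_div_iff₀ hden]
    exact_mod_cast Iff.rfl
  rw [hint]
  rcases le_or_gt 0 q.num with hnum | hnum
  · rw [← Int.toNat_of_nonneg hnum]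
    exact_mod_cast Iff.rfl
  · rw [Int.toNat_of_nonpos hnum.le]
    have : (0 : ℤ) < (a + 1) * q.den := by have := q.pos; positivity
    constructor <;> intro h
    · nlinarith
    · simp at h

theorem computable₂_natCast_div_succ : Computable₂ fun a b : ℕ => (a : ℚ) / (b + 1) := by
  have hex : ∀ p : ℕ × ℕ, ∃ k, ofNat ℚ k = p.1 / (p.2 + 1) := fun p => ⟨_, ofNat_encode _⟩
  have hnum : Computable fun k => (ofNat ℚ k).num := computable_num.comp (.ofNat ℚ)
  have hden : Computable fun k => (ofNat ℚ k).den := computable_den.comp (.ofNat ℚ)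
  have hfind : Computable fun p : ℕ × ℕ => Nat.find (hex p) := by
    refine Computable.find (Computable.computablePred ?_) hex
    exact (Primrec.and.to_comp.comp
      (Int.primrecPred_nonneg.decide.to_comp.comp (hnum.comp .snd))
      (Primrec.eq.decide.to_comp.comp
        (Primrec.nat_mul.to_comp.comp (Int.primrec_toNat.to_comp.comp (hnum.comp .snd))
          (Computable.succ.comp (Computable.snd.comp .fst)))
        (Primrec.nat_mul.to_comp.comp (Computable.fst.comp .fst) (hden.comp .snd)))).of_eq
      fun p => by simp [eq_natCast_div_succ_iff]
  exact ((Computable.ofNat ℚ).comp hfind).of_eq fun p => Nat.find_spec (hex p)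

end Rat

open scoped Classical in
theorem partialDensity_eq_count (A : Set ℕ) :
    partialDensity A = fun n => (Nat.count (· ∈ A) (n + 1) : ℝ) / (n + 1) := by
  funext n
  rw [partialDensity, Nat.count_eq_card_filter_range]

open scoped Classical in
theorem hasDensity_iff_tendsto_count_div (A : Set ℕ) (r : ℝ) :
    HasDensity A r ↔ Tendsto (fun n => (Nat.count (· ∈ A) n : ℝ) / n) atTop (𝓝 r) := by
  have := tendsto_add_atTop_iff_nat (f := fun n => (Nat.count (· ∈ A) n : ℝ) / n) (l := 𝓝 r) 1
  push_cast at this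
  rw [HasDensity, partialDensity_eq_count, this]

theorem ComputableSet.delta02Real_of_hasDensity {A : Set ℕ} (hA : ComputableSet A) {r : ℝ}
    (h : HasDensity A r) : Delta02Real r := by
  classical
  refine ⟨fun n => (Nat.count (· ∈ A) (n + 1) : ℚ) / (n + 1), ?_, ?_⟩
  · exact Rat.computable₂_natCast_div_succ.comp (hA.computable_count.comp .succ) .id
  · rw [HasDensity, partialDensity_eq_count] at h
    push_cast
    exact h

noncomputable def greedyCount (Q : ℕ → ℝ) : ℕ → ℕ
  | 0 => 0
  | n + 1 =>
    if (greedyCount Q n + 1 : ℝ) ≤ (n + 1) * Q n then greedyCount Q n + 1 else greedyCount Q n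

def greedySet (Q : ℕ → ℝ) : Set ℕ := {n | (greedyCount Q n + 1 : ℝ) ≤ (n + 1) * Q n}

open scoped Classical in
theorem count_greedySet (Q : ℕ → ℝ) (n : ℕ) :
    Nat.count (· ∈ greedySet Q) n = greedyCount Q n := by
  induction n with
  | zero => rfl
  | succ n ih =>
    rw [Nat.count_succ, ih, greedyCount]
    by_cases h : n ∈ greedySet Q
    · rw [if_pos h]; exact (if_pos h).symm
    · rw [if_neg h]; exact (if_neg h).symm

section Greedy

variable {Q : ℕ → ℝ} {N : ℕ} {s : ℝ}

theorem greedyCount_le_add (hQ : ∀ n ≥ N, Q n ≤ s) (hs : 0 ≤ s) :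
    ∀ n ≥ N, (greedyCount Q n : ℝ) ≤ greedyCount Q N + n * s := by
  intro n hn
  induction n, hn using Nat.le_induction with
  | base => nlinarith [(N.cast_nonneg : (0 : ℝ) ≤ N)]
  | succ n hn ih =>
    have hQn := hQ n hn
    rw [greedyCount]
    split_ifs with h
    · push_cast
      nlinarith [(Nat.cast_nonneg (greedyCount Q N) : (0 : ℝ) ≤ _), (n.cast_nonneg : (0 : ℝ) ≤ n)]
    · push_cast; nlinarith

theorem sub_le_greedyCount (hQ : ∀ n ≥ N, s ≤ Q n) (hs : s ≤ 1) :
    ∀ n ≥ N, n * s - N - 1 ≤ (greedyCount Q n : ℝ) := by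
  intro n hn
  induction n, hn using Nat.le_induction with
  | base =>
    nlinarith [(N.cast_nonneg : (0 : ℝ) ≤ N), (Nat.cast_nonneg (greedyCount Q N) : (0 : ℝ) ≤ _)]
  | succ n hn ih =>
    have hQn := hQ n hn
    rw [greedyCount]
    split_ifs with h
    · push_cast; linarith
    · rw [not_le] at h
      push_cast
      nlinarith [(n.cast_nonneg : (0 : ℝ) ≤ n), (N.cast_nonneg : (0 : ℝ) ≤ N)]

end Greedy

theorem tendsto_greedyCount_div {Q : ℕ → ℝ} {r : ℝ} (hQ : Tendsto Q atTop (𝓝 r))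
    (hr : r ∈ Set.Icc (0 : ℝ) 1) :
    Tendsto (fun n => (greedyCount Q n : ℝ) / n) atTop (𝓝 r) := by
  rw [tendsto_order]
  constructor
  · intro a har
    obtain ⟨s, has, hsr⟩ := exists_between har
    obtain ⟨N, hN⟩ := eventually_atTop.1 (hQ.eventually (Ici_mem_nhds hsr))
    have hlim : Tendsto (fun n : ℕ => s - (N + 1 : ℝ) / n) atTop (𝓝 s) := by
      simpa using tendsto_const_nhds.sub (tendsto_const_div_atTop_nhds_zero_nat ((N : ℝ) + 1))
    filter_upwards [hlim.eventually (lt_mem_nhds has), eventually_ge_atTop (max N 1)]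
      with n hlt hn
    have hpos : (0 : ℝ) < n := by exact_mod_cast (le_max_right N 1).trans hn
    have := sub_le_greedyCount hN (hsr.le.trans hr.2) n ((le_max_left N 1).trans hn)
    calc a < s - (N + 1 : ℝ) / n := hlt
      _ = (n * s - N - 1) / n := by field_simp; ring
      _ ≤ greedyCount Q n / n := by gcongr
  · intro b hrb
    obtain ⟨s, hrs, hsb⟩ := exists_between hrb
    obtain ⟨N, hN⟩ := eventually_atTop.1 (hQ.eventually (Iic_mem_nhds hrs))
    have hlim : Tendsto (fun n : ℕ => s + (greedyCount Q N : ℝ) / n) atTop (𝓝 s) := by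
      simpa using
        tendsto_const_nhds.add (tendsto_const_div_atTop_nhds_zero_nat (greedyCount Q N : ℝ))
    filter_upwards [hlim.eventually (gt_mem_nhds hsb), eventually_ge_atTop (max N 1)]
      with n hlt hn
    have hpos : (0 : ℝ) < n := by exact_mod_cast (le_max_right N 1).trans hn
    have := greedyCount_le_add hN (hr.1.trans hrs.le) n ((le_max_left N 1).trans hn)
    calc (greedyCount Q n : ℝ) / n ≤ (greedyCount Q N + n * s) / n := by gcongr
      _ = s + (greedyCount Q N : ℝ) / n := by field_simp; ring
      _ < b := hlt

theorem hasDensity_greedySet {Q : ℕ → ℝ} {r : ℝ} (hQ : Tendsto Q atTop (𝓝 r))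
    (hr : r ∈ Set.Icc (0 : ℝ) 1) : HasDensity (greedySet Q) r := by
  classical
  rw [hasDensity_iff_tendsto_count_div]
  simpa only [count_greedySet] using tendsto_greedyCount_div hQ hr

open scoped Classical in
theorem computableSet_greedySet {q : ℕ → ℚ} (hq : Computable q) :
    ComputableSet (greedySet fun n => (q n : ℝ)) := by
  have hiff : ∀ n c : ℕ, ((c : ℝ) + 1 ≤ (n + 1) * q n) ↔
      (c + 1) * (q n).den ≤ (n + 1) * (q n).num.toNat := by
    intro n c
    have := Rat.natCast_succ_le_mul_iff c (n + 1) (q n)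
    push_cast at this
    rw [← this]
    exact_mod_cast Iff.rfl
  have htest : Computable₂ fun n c : ℕ =>
      decide ((c + 1) * (q n).den ≤ (n + 1) * (q n).num.toNat) :=
    Primrec.nat_le.decide.to_comp.comp
      (Primrec.nat_mul.to_comp.comp (Computable.succ.comp .snd)
        (Rat.computable_den.comp (hq.comp .fst)))
      (Primrec.nat_mul.to_comp.comp (Computable.succ.comp .fst)
        (Int.primrec_toNat.to_comp.comp (Rat.computable_num.comp (hq.comp .fst))))
  have hcount : Computable (greedyCount fun n => (q n : ℝ)) := by
    refine (Computable.nat_rec .id (.const 0) ((htest.comp (Computable.fst.comp .snd)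
      (Computable.snd.comp .snd)).cond (Computable.succ.comp (Computable.snd.comp .snd))
      (Computable.snd.comp .snd)).to₂).of_eq fun n => ?_
    induction n with
    | zero => rfl
    | succ n ih => simp [greedyCount, hiff, ← ih]
  exact Computable.computablePred ((htest.comp .id hcount).of_eq fun n => by simp [greedySet, hiff])

/-- `r ∈ [0,1]` is the density of a computable set iff `r` is a
`Δ⁰₂` real. -/
theorem stmt13 (r : ℝ) (hr : r ∈ Set.Icc (0 : ℝ) 1) :
    (∃ A : Set ℕ, ComputableSet A ∧ HasDensity A r) ↔ Delta02Real r := by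
  constructor
  · rintro ⟨A, hA, hd⟩
    exact hA.delta02Real_of_hasDensity hd
  · rintro ⟨q, hq, hlim⟩
    exact ⟨greedySet fun n => q n, computableSet_greedySet hq, hasDensity_greedySet hlim hr⟩
end
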